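/- arXiv:1611.03362 — 5 statements merged into one kernel-verified Lean document; each statement's English description precedes it below -/
import Mathlib

section
/- Let a and b be positive real numbers with a ≠ b. Then 4ab/(a-b)² > min{((a+b)/b)² - 1, ((a+b)/a)² - 1}. -/
theorem appendix_prop (a b : ℝ) (ha : 0 < a) (hb : 0 < b) (hab : a ≠ b) :
    4 * a * b / (a - b) ^ 2 >
      min (((a + b) / b) ^ 2 - 1) (((a + b) / a) ^ 2 - 1) := by
  have hsq : (0:ℝ) < (a - b) ^ 2 := by
    have := sub_ne_zero.mpr hab
    positivity
  rcases lt_or_gt_of_ne hab with h | h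
  · -- a < b : use left arm
    refine lt_of_le_of_lt (min_le_left _ _) ?_
    have hb2 : (0:ℝ) < b ^ 2 := by positivity
    have heq : ((a + b) / b) ^ 2 - 1 = ((a + b) ^ 2 - b ^ 2) / b ^ 2 := by
      field_simp
    rw [heq, div_lt_div_iff₀ hb2 hsq]
    nlinarith [mul_pos (mul_pos ha hb) hb, mul_pos (sub_pos.mpr h) (mul_pos hb hb),
      mul_pos (mul_pos ha ha) (sub_pos.mpr h), sq_nonneg (a - b), sq_nonneg (a + b)]
  · -- b < a : use right arm
    refine lt_of_le_of_lt (min_le_right _ _) ?_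
    have ha2 : (0:ℝ) < a ^ 2 := by positivity
    have heq : ((a + b) / a) ^ 2 - 1 = ((a + b) ^ 2 - a ^ 2) / a ^ 2 := by
      field_simp
    rw [heq, div_lt_div_iff₀ ha2 hsq]
    nlinarith [mul_pos (mul_pos hb ha) ha, mul_pos (sub_pos.mpr h) (mul_pos ha ha),
      mul_pos (mul_pos hb hb) (sub_pos.mpr h), sq_nonneg (a - b), sq_nonneg (a + b)]
end

section
/- Let p and q be integers with p > q ≥ 1. Then 4pq/(p-q)² ≥ ((p+q)/(p-1))² - 1, with equality if and only if q = 1. (Here p - 1 ≥ 1 so the right-hand side is finite.) -/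
theorem appendix_integer_version (p q : ℤ) (hq : 1 ≤ q) (hpq : q < p) :
    (4 * (p : ℝ) * q / ((p : ℝ) - q) ^ 2 ≥ (((p : ℝ) + q) / ((p : ℝ) - 1)) ^ 2 - 1) ∧
      (4 * (p : ℝ) * q / ((p : ℝ) - q) ^ 2 = (((p : ℝ) + q) / ((p : ℝ) - 1)) ^ 2 - 1 ↔ q = 1) := by
  have hq' : (1 : ℝ) ≤ (q : ℝ) := by exact_mod_cast hq
  have hpq' : (q : ℝ) + 1 ≤ (p : ℝ) := by exact_mod_cast hpq
  have h1 : (0 : ℝ) < (p : ℝ) - q := by linarith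
  have h2 : (0 : ℝ) < (p : ℝ) - 1 := by linarith
  have hd1 : ((p : ℝ) - q) ^ 2 ≠ 0 := by positivity
  have hd2 : ((p : ℝ) - 1) ^ 2 ≠ 0 := by positivity
  have key : 4 * (p : ℝ) * q / ((p : ℝ) - q) ^ 2 - ((((p : ℝ) + q) / ((p : ℝ) - 1)) ^ 2 - 1)
      = (((q : ℝ) - 1) * ((p : ℝ) + q) ^ 2 * (2 * (p : ℝ) - q - 1))
        / (((p : ℝ) - q) ^ 2 * ((p : ℝ) - 1) ^ 2) := by
    field_simp
    ring
  have hpos1 : (0 : ℝ) < ((p : ℝ) + q) ^ 2 := pow_pos (by linarith) 2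
  have hpos2 : (0 : ℝ) < 2 * (p : ℝ) - q - 1 := by linarith
  have hden : (0 : ℝ) < ((p : ℝ) - q) ^ 2 * ((p : ℝ) - 1) ^ 2 := by positivity
  constructor
  · rw [ge_iff_le, ← sub_nonneg, key]
    have : (0 : ℝ) ≤ ((q : ℝ) - 1) := by linarith
    positivity
  · rw [← sub_eq_zero, key, div_eq_zero_iff]
    constructor
    · rintro (h | h)
      · have : (q : ℝ) - 1 = 0 := by
          rcases mul_eq_zero.1 h with h' | h'
          · rcases mul_eq_zero.1 h' with h'' | h''
            · exact h''
            · exact absurd h'' (by positivity)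
          · exact absurd h' (by linarith)
        have : (q : ℝ) = 1 := by linarith
        exact_mod_cast this
      · exact absurd h (ne_of_gt hden)
    · intro h
      left
      have : (q : ℝ) = 1 := by exact_mod_cast h
      rw [this]
      ring
end

section
/- Let k₁, k₂ be real numbers with 0 < k₁ < k₂ and S = k₁ + k₂. Then min{ 3, 4k₁k₂/(k₂ - k₁)², (2S/(k₁ + 2k₂))² - 1, (2S/(2k₁ + k₂))² - 1 } = (2S/(k₁ + 2k₂))² - 1 = (1/(1 - k₁/(2S)))² - 1. -/
theorem min_of_normal_radius_bounds (k₁ k₂ : ℝ) (hk₁ : 0 < k₁) (hk₁₂ : k₁ < k₂)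
    (S : ℝ) (hS : S = k₁ + k₂) :
    min (min 3 (4 * k₁ * k₂ / (k₂ - k₁) ^ 2))
        (min ((2 * S / (k₁ + 2 * k₂)) ^ 2 - 1) ((2 * S / (2 * k₁ + k₂)) ^ 2 - 1))
      = (2 * S / (k₁ + 2 * k₂)) ^ 2 - 1 ∧
    (2 * S / (k₁ + 2 * k₂)) ^ 2 - 1 = (1 / (1 - k₁ / (2 * S))) ^ 2 - 1 := by
  subst hS
  have hk2 : 0 < k₂ := lt_trans hk₁ hk₁₂
  have hd1 : (0:ℝ) < k₁ + 2 * k₂ := by linarith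
  have hd2 : (0:ℝ) < 2 * k₁ + k₂ := by linarith
  have hd3 : (0:ℝ) < k₂ - k₁ := by linarith
  have hS2 : (0:ℝ) < 2 * (k₁ + k₂) := by linarith
  constructor
  · have hAB : (2 * (k₁ + k₂) / (k₁ + 2 * k₂)) ^ 2 - 1 ≤
        (2 * (k₁ + k₂) / (2 * k₁ + k₂)) ^ 2 - 1 := by
      have h := div_le_div_of_nonneg_left hS2.le hd2 (by linarith : 2 * k₁ + k₂ ≤ k₁ + 2 * k₂)
      have h0 : (0:ℝ) ≤ 2 * (k₁ + k₂) / (k₁ + 2 * k₂) := by positivity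
      nlinarith
    have hA3 : (2 * (k₁ + k₂) / (k₁ + 2 * k₂)) ^ 2 - 1 ≤ 3 := by
      rw [div_pow, sub_le_iff_le_add, div_le_iff₀ (by positivity)]
      nlinarith
    have hA4 : (2 * (k₁ + k₂) / (k₁ + 2 * k₂)) ^ 2 - 1 ≤ 4 * k₁ * k₂ / (k₂ - k₁) ^ 2 := by
      rw [div_pow, sub_le_iff_le_add, div_add' _ _ _ (by positivity),
        div_le_div_iff₀ (by positivity) (by positivity)]
      nlinarith [mul_nonneg (mul_nonneg (sq_nonneg (k₁+k₂)) (by linarith : (0:ℝ) ≤ 3*k₁))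
        (by linarith : (0:ℝ) ≤ 4*k₂-k₁)]
    rw [min_eq_left hAB, min_eq_right (le_min hA3 hA4)]
  · have h1 : 1 - k₁ / (2 * (k₁ + k₂)) = (k₁ + 2 * k₂) / (2 * (k₁ + k₂)) := by
      field_simp; ring
    rw [h1, one_div_div]
end

section
/- Let ℓ ≥ 2 be an integer, let h be a real symmetric ℓ × ℓ matrix with trace(h) = 0, let α > 0 be a real number with ‖h‖ ≤ α (Frobenius norm), and let t be a real number with 0 ≤ t ≤ (1/α)·√(ℓ/(ℓ-1)). Then det(I - t·h) ≥ (1 - αt·√((ℓ-1)/ℓ))·(1 + αt/√(ℓ(ℓ-1)))^{ℓ-1}. -/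
/-!
Diagonalising `h`, the determinant is `∏ (1 - μᵢ)` with `μᵢ = t λᵢ`, `∑ μᵢ = 0` and
`∑ μᵢ² ≤ (α t)²`. With `b = α t / √(ℓ (ℓ - 1))`, the substitution `yᵢ = (μᵢ + b) / (1 + b)`
turns the constraints into `∑ yᵢ = u`, `∑ yᵢ² ≤ u²` with `u = ℓ b / (1 + b)`, and the claim into
`∏ (1 - yᵢ) ≥ 1 - u`, with equality at `y = (u, 0, …, 0)`. Since
`(-log (1 - y) - y) / y²` is a power series with positive coefficients, the parabola
`y ↦ (log (1 - u) + u) y² / u²` lies below `log (1 - y) + y` for all `y ≤ u`; summing this over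
the `yᵢ` gives `∑ log (1 - yᵢ) ≥ log (1 - u)`.
-/

open Finset Matrix Real Unitary

namespace Real

lemma hasSum_pow_div_neg_log_one_sub_sub {x : ℝ} (hx : |x| < 1) :
    HasSum (fun n : ℕ => x ^ (n + 2) / (n + 2)) (-log (1 - x) - x) := by
  simpa [add_assoc, one_add_one_eq_two] using
    (hasSum_nat_add_iff' 1).2 (hasSum_pow_div_log_of_abs_lt_one hx)

lemma sq_div_two_le_neg_log_one_sub_sub {u : ℝ} (hu₀ : 0 ≤ u) (hu₁ : u < 1) :
    u ^ 2 / 2 ≤ -log (1 - u) - u := by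
  simpa using le_hasSum (hasSum_pow_div_neg_log_one_sub_sub (abs_lt.2 ⟨by linarith, hu₁⟩)) 0
    fun n _ => by positivity

/-- `y ↦ (-log (1 - y) - y) / y ^ 2` is monotone on `[0, 1)`, written without division. -/
lemma sq_mul_neg_log_one_sub_sub_le {y u : ℝ} (hy : 0 ≤ y) (hyu : y ≤ u) (hu : u < 1) :
    u ^ 2 * (-log (1 - y) - y) ≤ y ^ 2 * (-log (1 - u) - u) := by
  refine hasSum_le (fun n => ?_)
    ((hasSum_pow_div_neg_log_one_sub_sub (abs_lt.2 ⟨by linarith, by linarith⟩)).mul_left _)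
    ((hasSum_pow_div_neg_log_one_sub_sub (abs_lt.2 ⟨by linarith, hu⟩)).mul_left _)
  have := pow_le_pow_left₀ hy hyu n
  rw [pow_add, pow_add, ← mul_div_assoc, ← mul_div_assoc,
    div_le_div_iff_of_pos_right (by positivity)]
  calc u ^ 2 * (y ^ n * y ^ 2) = y ^ 2 * u ^ 2 * y ^ n := by ring
    _ ≤ y ^ 2 * u ^ 2 * u ^ n := by gcongr
    _ = y ^ 2 * (u ^ n * u ^ 2) := by ring

lemma sq_mul_log_one_sub_add_le {y u : ℝ} (hyu : y ≤ u) (hu₀ : 0 ≤ u) (hu₁ : u < 1) :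
    y ^ 2 * (log (1 - u) + u) ≤ u ^ 2 * (log (1 - y) + y) := by
  rcases le_or_gt 0 y with hy | hy
  · linarith [sq_mul_neg_log_one_sub_sub_le hy hyu hu₁]
  · have hlog : -y - y ^ 2 / 2 ≤ log (1 - y) := by
      have := le_log_one_add_of_nonneg (x := -y) (by linarith)
      rw [← sub_eq_add_neg] at this
      refine le_trans ?_ this
      rw [le_div_iff₀ (by linarith)]
      nlinarith [pow_two_nonneg y]
    have hu := sq_div_two_le_neg_log_one_sub_sub hu₀ hu₁
    nlinarith [mul_le_mul_of_nonneg_left hu (sq_nonneg y),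
      mul_le_mul_of_nonneg_left hlog (sq_nonneg u)]

end Real

lemma one_sub_le_prod_one_sub {ι : Type*} [Fintype ι] {y : ι → ℝ} {u : ℝ}
    (hsum : ∑ i, y i = u) (hsq : ∑ i, y i ^ 2 ≤ u ^ 2) (hu₀ : 0 ≤ u) (hu₁ : u ≤ 1) :
    1 - u ≤ ∏ i, (1 - y i) := by
  have hsq_le (i : ι) : y i ^ 2 ≤ u ^ 2 :=
    (single_le_sum (fun j _ => sq_nonneg (y j)) (mem_univ i)).trans hsq
  have hyu (i : ι) : y i ≤ u := (abs_le_of_sq_le_sq' (hsq_le i) hu₀).2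
  rcases hu₁.eq_or_lt with rfl | hu₁
  · rw [sub_self]
    exact prod_nonneg fun i _ => sub_nonneg.2 (hyu i)
  rcases hu₀.eq_or_lt with rfl | hu₀
  · have hy (i : ι) : y i = 0 := by simpa using hsq_le i
    simp [hy]
  have hpos (i : ι) : 0 < 1 - y i := by linarith [hyu i]
  have hlog : u ^ 2 * (log (1 - u) + u) ≤ u ^ 2 * (∑ i, log (1 - y i) + u) :=
    calc u ^ 2 * (log (1 - u) + u)
        ≤ (∑ i, y i ^ 2) * (log (1 - u) + u) :=
          mul_le_mul_of_nonpos_right hsq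
            (by linarith [log_le_sub_one_of_pos (by linarith : 0 < 1 - u)])
      _ = ∑ i, y i ^ 2 * (log (1 - u) + u) := sum_mul _ _ _
      _ ≤ ∑ i, u ^ 2 * (log (1 - y i) + y i) :=
          sum_le_sum fun i _ => sq_mul_log_one_sub_add_le (hyu i) hu₀.le hu₁
      _ = u ^ 2 * (∑ i, log (1 - y i) + u) := by rw [← mul_sum, sum_add_distrib, hsum]
  rw [← log_le_log_iff (by linarith) (prod_pos fun i _ => hpos i),
    log_prod fun i _ => (hpos i).ne']
  linarith [le_of_mul_le_mul_left hlog (by positivity)]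

lemma le_prod_one_sub_of_sum_eq_zero {ι : Type*} [Fintype ι] {m : ℕ}
    (hcard : Fintype.card ι = m + 1) {μ : ι → ℝ} {b : ℝ} (hsum : ∑ i, μ i = 0)
    (hsq : ∑ i, μ i ^ 2 ≤ (m + 1) * m * b ^ 2) (hb : 0 ≤ b) (hmb : m * b ≤ 1) :
    (1 - m * b) * (1 + b) ^ m ≤ ∏ i, (1 - μ i) := by
  have h1b : 0 < 1 + b := by linarith
  set u := (m + 1) * b / (1 + b) with hu
  have hfactor (i : ι) : 1 - μ i = (1 + b) * (1 - (μ i + b) / (1 + b)) := by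
    field_simp; ring
  have hsum_y : ∑ i, (μ i + b) / (1 + b) = u := by
    rw [← sum_div, sum_add_distrib, hsum, sum_const, card_univ, hcard, hu]
    simp
  have hsq_y : ∑ i, ((μ i + b) / (1 + b)) ^ 2 ≤ u ^ 2 := by
    have : ∑ i, (μ i + b) ^ 2 = ∑ i, μ i ^ 2 + 2 * b * ∑ i, μ i + (m + 1) * b ^ 2 := by
      simp only [add_sq, sum_add_distrib, ← sum_mul, ← mul_sum, sum_const, card_univ, hcard,
        nsmul_eq_mul, Nat.cast_add, Nat.cast_one]
      ring
    simp only [div_pow, ← sum_div, u]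
    gcongr
    rw [this, hsum]
    nlinarith
  have hu₁ : u ≤ 1 := by
    rw [div_le_one h1b]; linarith
  calc (1 - m * b) * (1 + b) ^ m = (1 + b) ^ (m + 1) * (1 - u) := by
        rw [hu]; field_simp; ring
    _ ≤ (1 + b) ^ (m + 1) * ∏ i, (1 - (μ i + b) / (1 + b)) := by
        gcongr
        exact one_sub_le_prod_one_sub hsum_y hsq_y (by positivity) hu₁
    _ = ∏ i, (1 - μ i) := by
        rw [prod_congr rfl fun i _ => hfactor i, prod_mul_distrib, prod_const, card_univ, hcard]

lemma lawlor_le_prod_one_sub {ι : Type*} [Fintype ι] {m : ℕ} (hm : 0 < m)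
    (hcard : Fintype.card ι = m + 1) {μ : ι → ℝ} {c : ℝ} (hsum : ∑ i, μ i = 0)
    (hsq : ∑ i, μ i ^ 2 ≤ c ^ 2) (hc₀ : 0 ≤ c) (hc₁ : c ≤ √((m + 1) / m)) :
    (1 - c * √(m / (m + 1))) * (1 + c / √((m + 1) * m)) ^ m ≤ ∏ i, (1 - μ i) := by
  have hm : (0 : ℝ) < m := by exact_mod_cast hm
  set b := c / √((m + 1) * m)
  have hsqrt_mul : √(m / (m + 1)) * √((m + 1) * m) = m := by
    rw [← sqrt_mul (by positivity), show m / (m + 1) * ((m + 1) * m) = (m : ℝ) ^ 2 by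
      field_simp, sqrt_sq (by positivity)]
  have hcb : c * √(m / (m + 1)) = m * b := by
    rw [mul_div_assoc', eq_div_iff (by positivity), mul_assoc, hsqrt_mul, mul_comm]
  have hmb : m * b ≤ 1 :=
    calc m * b = c * √(m / (m + 1)) := hcb.symm
      _ ≤ √((m + 1) / m) * √(m / (m + 1)) := by gcongr
      _ = 1 := by
        rw [← sqrt_mul (by positivity), div_mul_div_comm, mul_comm (m : ℝ),
          div_self (by positivity), sqrt_one]
  have hb_sq : (m + 1) * m * b ^ 2 = c ^ 2 := by
    rw [div_pow, sq_sqrt (by positivity)]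
    field_simp
  rw [hcb]
  exact le_prod_one_sub_of_sum_eq_zero hcard hsum (hb_sq ▸ hsq) (by positivity) hmb

lemma Matrix.det_conjStarAlgAut {n R : Type*} [Fintype n] [DecidableEq n] [CommRing R]
    [StarRing R] (u : unitary (Matrix n n R)) (M : Matrix n n R) :
    (conjStarAlgAut R _ u M).det = M.det := by
  rw [conjStarAlgAut_apply, det_mul, det_mul, mul_right_comm, ← det_mul,
    mul_star_self_of_mem u.2, det_one, one_mul]

lemma Matrix.trace_conjStarAlgAut {n R : Type*} [Fintype n] [DecidableEq n] [CommRing R]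
    [StarRing R] (u : unitary (Matrix n n R)) (M : Matrix n n R) :
    (conjStarAlgAut R _ u M).trace = M.trace := by
  rw [conjStarAlgAut_apply, trace_mul_cycle, coe_star_mul_self, one_mul]

namespace Matrix.IsHermitian

variable {n 𝕜 : Type*} [Fintype n] [DecidableEq n] [RCLike 𝕜] {A : Matrix n n 𝕜}

lemma det_one_sub_smul (hA : A.IsHermitian) (t : 𝕜) :
    (1 - t • A).det = ∏ i, (1 - t * hA.eigenvalues i) := by
  have : 1 - t • A = conjStarAlgAut 𝕜 _ hA.eigenvectorUnitary
      (diagonal fun i => 1 - t * hA.eigenvalues i) := by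
    conv_lhs => rw [hA.spectral_theorem]
    rw [← map_one (conjStarAlgAut 𝕜 _ hA.eigenvectorUnitary), ← map_smul, ← map_sub]
    congr 1
    ext i j
    by_cases hij : i = j <;> simp [hij, diagonal]
  rw [this, det_conjStarAlgAut, det_diagonal]

lemma trace_conjTranspose_mul_self (hA : A.IsHermitian) :
    (Aᴴ * A).trace = ∑ i, (hA.eigenvalues i : 𝕜) ^ 2 := by
  rw [hA.eq]
  conv_lhs => rw [hA.spectral_theorem]
  rw [← map_mul, trace_conjStarAlgAut, diagonal_mul_diagonal, trace_diagonal]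
  simp [sq]

end Matrix.IsHermitian

theorem lawlor_determinant_lower_bound (ℓ : ℕ) (hℓ : 2 ≤ ℓ)
    (h : Matrix (Fin ℓ) (Fin ℓ) ℝ) (hsymm : h.IsSymm) (htr : Matrix.trace h = 0)
    (α : ℝ) (hα : 0 < α) (hnorm : Real.sqrt (Matrix.trace (hᵀ * h)) ≤ α)
    (t : ℝ) (ht₀ : 0 ≤ t) (ht₁ : t ≤ (1 / α) * Real.sqrt ((ℓ : ℝ) / ((ℓ : ℝ) - 1))) :
    Matrix.det (1 - t • h) ≥
      (1 - α * t * Real.sqrt (((ℓ : ℝ) - 1) / ℓ)) *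
        (1 + α * t / Real.sqrt ((ℓ : ℝ) * ((ℓ : ℝ) - 1))) ^ (ℓ - 1) := by
  obtain ⟨m, rfl⟩ : ∃ m, ℓ = m + 1 := ⟨ℓ - 1, by omega⟩
  have hH : h.IsHermitian := isHermitian_iff_isSymm.2 hsymm
  have hsum : ∑ i, t * hH.eigenvalues i = 0 := by
    have : ∑ i, hH.eigenvalues i = 0 := by simpa [hH.trace_eq_sum_eigenvalues] using htr
    rw [← mul_sum, this, mul_zero]
  have hsq : ∑ i, (t * hH.eigenvalues i) ^ 2 ≤ (α * t) ^ 2 :=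
    calc ∑ i, (t * hH.eigenvalues i) ^ 2 = t ^ 2 * (hᵀ * h).trace := by
          rw [← conjTranspose_eq_transpose_of_trivial, hH.trace_conjTranspose_mul_self, mul_sum]
          simp [mul_pow]
      _ ≤ t ^ 2 * α ^ 2 := by gcongr; exact (sqrt_le_left hα.le).1 hnorm
      _ = (α * t) ^ 2 := by ring
  have hαt : α * t ≤ √((m + 1) / m) := by
    push_cast at ht₁
    rwa [add_sub_cancel_right, one_div, inv_mul_eq_div, le_div_iff₀' hα] at ht₁
  rw [ge_iff_le, hH.det_one_sub_smul]
  push_cast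
  simpa using lawlor_le_prod_one_sub (by omega) (Fintype.card_fin _) hsum hsq (by positivity) hαt
end

section
/- Let ℓ ≥ 2 be an integer and let x be a real number with 0 < x ≤ √(ℓ/(ℓ-1)). Then (1 - x·√((ℓ-1)/ℓ))·(1 + x/√(ℓ(ℓ-1)))^{ℓ-1} > (1 - x)·e^x. -/
theorem F_greater_than_limit (ℓ : ℕ) (hℓ : 2 ≤ ℓ) (x : ℝ) (hx₀ : 0 < x)
    (hx₁ : x ≤ Real.sqrt ((ℓ : ℝ) / ((ℓ : ℝ) - 1))) :
    (1 - x * Real.sqrt (((ℓ : ℝ) - 1) / ℓ)) *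
        (1 + x / Real.sqrt ((ℓ : ℝ) * ((ℓ : ℝ) - 1))) ^ (ℓ - 1)
      > (1 - x) * Real.exp x := by
  have hℓR : (2:ℝ) ≤ (ℓ:ℝ) := by exact_mod_cast hℓ
  set n : ℝ := (ℓ : ℝ) - 1 with hn_def
  have hn1 : (1:ℝ) ≤ n := by simp only [hn_def]; linarith
  have hn0 : (0:ℝ) < n := lt_of_lt_of_le one_pos hn1
  have hℓn : (ℓ:ℝ) = n + 1 := by simp [hn_def]
  set a : ℝ := Real.sqrt (n / (n+1)) with ha_def
  have hfrac_nonneg : (0:ℝ) ≤ n/(n+1) := by positivity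
  have ha2 : a^2 = n/(n+1) := Real.sq_sqrt hfrac_nonneg
  have ha2' : a^2 * (n+1) = n := by
    rw [ha2]; field_simp
  have ha0 : (0:ℝ) < a := Real.sqrt_pos.mpr (by positivity)
  have ha1 : a < 1 := by
    by_contra h
    push_neg at h
    nlinarith [mul_le_mul_of_nonneg_left (mul_le_mul h h (by linarith) ha0.le) (by linarith : (0:ℝ) ≤ n+1)]
  -- a * x ≤ 1
  have hsqrt1 : a * Real.sqrt ((n+1)/n) = 1 := by
    rw [ha_def, ← Real.sqrt_mul hfrac_nonneg]
    rw [show n/(n+1) * ((n+1)/n) = 1 by field_simp]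
    exact Real.sqrt_one
  have hax : a * x ≤ 1 := by
    have := mul_le_mul_of_nonneg_left hx₁ ha0.le
    rwa [hℓn, hsqrt1] at this
  -- rewrite the sqrt expressions
  have hs1 : Real.sqrt (((ℓ:ℝ) - 1)/ℓ) = a := by rw [hℓn, show n+1-1 = n from by ring]
  have hs2 : Real.sqrt ((ℓ:ℝ) * ((ℓ:ℝ) - 1)) = n / a := by
    rw [hℓn, show n+1-1 = n from by ring, eq_div_iff ha0.ne', ha_def,
      ← Real.sqrt_mul (by positivity), show (n+1)*n * (n/(n+1)) = n^2 from by field_simp]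
    exact Real.sqrt_sq hn0.le
  rw [hs1, hs2, div_div_eq_mul_div]
  clear_value a n
  clear hx₁ hs1 hs2 hsqrt1 hn_def ha_def ha2 hfrac_nonneg
  -- goal : (1 - x*a) * (1 + x*a/n)^(ℓ-1) > (1-x) * exp x
  have hbase : (0:ℝ) < 1 + x*a/n := by positivity
  rcases lt_or_ge x 1 with hx1 | hx1
  · -- main case 0 < x < 1
    have hax1 : a * x < 1 := by nlinarith
    set g : ℝ → ℝ := fun t =>
      n * Real.log (1 + a/n*t) + Real.log (1 - a*t) - t - Real.log (1 - t) with hg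
    have key : ∀ t ∈ Set.Icc (0:ℝ) x, HasDerivAt g
        (n * ((a/n)/(1 + a/n*t)) + (-a)/(1 - a*t) - 1 - (-1)/(1 - t)) t := by
      intro t ht
      have ht0 : 0 ≤ t := ht.1
      have ht1 : t < 1 := lt_of_le_of_lt ht.2 hx1
      have h1 : (0:ℝ) < 1 + a/n*t := by positivity
      have h2 : (0:ℝ) < 1 - a*t := by nlinarith
      have h3 : (0:ℝ) < 1 - t := by linarith
      have d1 : HasDerivAt (fun t : ℝ => 1 + a/n*t) (a/n) t := by
        simpa using ((hasDerivAt_id t).const_mul (a/n)).const_add 1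
      have d2 : HasDerivAt (fun t : ℝ => 1 - a*t) (-a) t := by
        simpa using ((hasDerivAt_id t).const_mul a).const_sub 1
      have d3 : HasDerivAt (fun t : ℝ => 1 - t) (-1) t := by
        simpa using (hasDerivAt_id t).const_sub 1
      exact ((((d1.log h1.ne').const_mul n).add (d2.log h2.ne')).sub
        (hasDerivAt_id t)).sub (d3.log h3.ne')
    have hmono : StrictMonoOn g (Set.Icc 0 x) := by
      apply strictMonoOn_of_deriv_pos (convex_Icc 0 x)
      · intro t ht
        exact (key t ht).differentiableAt.continuousAt.continuousWithinAt
      · intro t ht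
        rw [interior_Icc] at ht
        have ht0 : 0 < t := ht.1
        have ht1 : t < 1 := lt_trans ht.2 hx1
        have htIcc : t ∈ Set.Icc (0:ℝ) x := ⟨ht0.le, ht.2.le⟩
        rw [(key t htIcc).deriv]
        have h1 : (0:ℝ) < 1 + a/n*t := by positivity
        have h2 : (0:ℝ) < 1 - a*t := by nlinarith
        have h3 : (0:ℝ) < 1 - t := by linarith
        have hE : n * ((a/n)/(1 + a/n*t)) + (-a)/(1 - a*t) - 1 - (-1)/(1 - t)
            = t^2*(n*(1-a)+a*(1-a*t)) / ((1 + a/n*t)*(1 - a*t)*(1 - t)*n) := by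
          field_simp
          ring_nf
          linear_combination (t^2 - t) * ha2'
        rw [hE]
        apply div_pos
        · have : 0 < n*(1-a)+a*(1-a*t) := by nlinarith
          positivity
        · positivity
    have hg0 : g 0 = 0 := by simp [hg]
    have hgx : 0 < g x := by
      rw [← hg0]
      exact hmono (Set.left_mem_Icc.mpr hx₀.le) (Set.right_mem_Icc.mpr hx₀.le) hx₀
    have h2 : (0:ℝ) < 1 - a*x := by nlinarith
    have h3 : (0:ℝ) < 1 - x := by linarith
    have h1 : (0:ℝ) < 1 + a/n*x := by positivity
    have hlt : x + Real.log (1-x) <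
        n * Real.log (1 + a/n*x) + Real.log (1 - a*x) := by
      simp only [hg] at hgx; linarith
    have hexp := Real.exp_lt_exp.mpr hlt
    rw [Real.exp_add, Real.exp_log h3, Real.exp_add, Real.exp_log h2] at hexp
    have hcast : ((ℓ - 1 : ℕ) : ℝ) = n := by
      rw [Nat.cast_sub (by omega : 1 ≤ ℓ), hℓn]; ring
    have hpow : Real.exp (n * Real.log (1 + a/n*x)) = (1 + a/n*x)^(ℓ-1) := by
      rw [show n * Real.log (1 + a/n*x) = ((ℓ-1:ℕ):ℝ) * Real.log (1 + a/n*x) from by rw [hcast],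
        Real.exp_nat_mul, Real.exp_log h1]
    rw [hpow] at hexp
    calc (1-x) * Real.exp x = Real.exp x * (1-x) := by ring
      _ < (1 + a/n*x)^(ℓ-1) * (1 - a*x) := hexp
      _ = (1 - x*a) * (1 + x*a/n)^(ℓ-1) := by ring_nf
  · -- case x ≥ 1
    have hLHS : 0 ≤ (1 - x*a) * (1 + x*a/n)^(ℓ-1) := by
      apply mul_nonneg
      · nlinarith
      · positivity
    rcases eq_or_lt_of_le hx1 with hxe | hxg
    · subst hxe
      have : (0:ℝ) < (1 - 1*a) * (1 + 1*a/n)^(ℓ-1) := by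
        apply mul_pos
        · nlinarith
        · positivity
      simpa using this
    · have : (1 - x) * Real.exp x < 0 :=
        mul_neg_of_neg_of_pos (by linarith) (Real.exp_pos x)
      linarith
end
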